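/- Let α = 3 + 2√2. If (x_n) is a sequence of positive real numbers such that for every n ≥ 1, β·x_n ≥ (∑_{i=1}^{n+1} x_i) + x_{n+1}, then β ≥ 3 + 2√2. -/

import Mathlib

/-!
Write `S n = x 1 + ⋯ + x n` and `r n = S n / x n`. The hypothesis gives `2 x (n+1) ≤ (β - r n) x n`,
hence `r (n+1) ≥ 1 + 2 r n / (β - r n)`. If `β < 3 + 2√2` (and `β > 1`, which the case `n = 1`
forces), the quadratic `r² - (β - 1) r + β` has negative discriminant, so each step increases the
ratio by at least `ε = (6β - β² - 1) / (4β) > 0`. Thus `r n` grows without bound, while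
`β x n > S n` keeps it below `β`.
-/

open Finset

lemma partial_sum_ratio_step {β ε r x y S : ℝ} (hε : 0 ≤ ε)
    (hεβ : 4 * β * ε ≤ 6 * β - β ^ 2 - 1) (hr : 0 ≤ r) (hx : 0 < x) (hy : 0 < y)
    (hS : r * x ≤ S) (hrec : S + 2 * y ≤ β * x) :
    (r + ε) * y ≤ S + y := by
  have hrβ : 0 < β - r := by nlinarith
  -- `r² - (β - 1) r + β` has discriminant `β² - 6β + 1`, so it stays above `βε ≥ (β - r)ε`.
  have hquad : (r + ε - 1) * (β - r) ≤ 2 * r := by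
    nlinarith [sq_nonneg (r - (β - 1) / 2), mul_nonneg hε hr]
  have hSy : (β - r) * ((r + ε - 1) * y) ≤ (β - r) * S := by
    calc (β - r) * ((r + ε - 1) * y) = (r + ε - 1) * (β - r) * y := by ring
      _ ≤ 2 * r * y := mul_le_mul_of_nonneg_right hquad hy.le
      _ ≤ r * ((β - r) * x) := by nlinarith
      _ ≤ (β - r) * S := by nlinarith
  nlinarith [le_of_mul_le_mul_left hSy hrβ]

lemma linear_ratio_lower_bound {β ε : ℝ} {x : ℕ → ℝ} (hε : 0 ≤ ε)
    (hεβ : 4 * β * ε ≤ 6 * β - β ^ 2 - 1) (hpos : ∀ n, 1 ≤ n → 0 < x n)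
    (hrec : ∀ n, 1 ≤ n → β * x n ≥ (∑ i ∈ Icc 1 (n + 1), x i) + x (n + 1)) :
    ∀ n, 1 ≤ n → (1 + (n - 1) * ε) * x n ≤ ∑ i ∈ Icc 1 n, x i := by
  intro n hn
  induction n, hn using Nat.le_induction with
  | base => simp
  | succ n hn ih =>
    have hr : 0 ≤ 1 + ((n : ℝ) - 1) * ε := by
      have : (1 : ℝ) ≤ n := by exact_mod_cast hn
      nlinarith
    have hstep := hrec n hn
    rw [sum_Icc_succ_top (by omega)] at hstep ⊢
    have := partial_sum_ratio_step hε hεβ hr (hpos n hn) (hpos (n + 1) (by omega)) ih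
      (by linarith)
    push_cast
    linarith

theorem stmt_0 (β : ℝ) (x : ℕ → ℝ)
    (hpos : ∀ n, 1 ≤ n → 0 < x n)
    (hrec : ∀ n, 1 ≤ n → β * x n ≥ (∑ i ∈ Finset.Icc 1 (n+1), x i) + x (n+1)) :
    β ≥ 3 + 2 * Real.sqrt 2 := by
  by_contra! hβ
  have hsqrt : Real.sqrt 2 ^ 2 = 2 := Real.sq_sqrt (by norm_num)
  have hsum (n : ℕ) (hn : 1 ≤ n) : ∑ i ∈ Icc 1 (n + 1), x i = (∑ i ∈ Icc 1 n, x i) + x (n + 1) :=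
    sum_Icc_succ_top (by omega) x
  have hβ1 : 1 < β := by
    have := hrec 1 le_rfl
    simp only [hsum 1 le_rfl, Icc_self, sum_singleton] at this
    nlinarith [hpos 1 le_rfl, hpos 2 (by norm_num)]
  set ε := (6 * β - β ^ 2 - 1) / (4 * β)
  have hε : 0 < ε := by
    have : 0 < (3 + 2 * Real.sqrt 2 - β) * (β - 3 + 2 * Real.sqrt 2) :=
      mul_pos (by linarith) (by nlinarith [Real.sqrt_nonneg 2])
    exact div_pos (by nlinarith) (by linarith)
  have hεβ : 4 * β * ε ≤ 6 * β - β ^ 2 - 1 := by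
    rw [mul_div_cancel₀ _ (by positivity)]
  have hbound (n : ℕ) (hn : 1 ≤ n) : 1 + ((n : ℝ) - 1) * ε < β := by
    have := linear_ratio_lower_bound hε.le hεβ hpos hrec n hn
    have := hrec n hn
    rw [hsum n hn] at this
    nlinarith [hpos n hn, hpos (n + 1) (by omega)]
  obtain ⟨n, hn⟩ := exists_nat_gt ((β - 1) / ε)
  have h := hbound (n + 1) (by omega)
  push_cast at h
  rw [div_lt_iff₀ hε] at hn
  linarith
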